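/- arXiv:2302.01638 — 5 statements merged into one kernel-verified Lean document; each statement's English description precedes it below -/
import Mathlib

section
/- If G is a 2-sparse graph, then G is chordless. -/
/-! An endpoint of a chord `uv` is adjacent to its two neighbours on the cycle avoiding `uv` and,
besides, to the other endpoint, so it has degree at least 3. A chord therefore has no endpoint of
degree at most 2. -/

open SimpleGraph

noncomputable def edeg {V : Type*} (G : SimpleGraph V) (v : V) : ℕ :=
  {u | G.Adj v u}.ncard

def IsProperEdgeColoring {V : Type*} (G : SimpleGraph V) (c : Sym2 V → ℕ) : Prop :=
  ∀ e₁ ∈ G.edgeSet, ∀ e₂ ∈ G.edgeSet, e₁ ≠ e₂ → (∃ v, v ∈ e₁ ∧ v ∈ e₂) → c e₁ ≠ c e₂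

def IsAcyclicEdgeColoring {V : Type*} (G : SimpleGraph V) (c : Sym2 V → ℕ) : Prop :=
  IsProperEdgeColoring G c ∧
  ∀ (v : V) (w : G.Walk v v), w.IsCycle →
    ¬ ∃ α β : ℕ, ∀ e ∈ w.edges, c e = α ∨ c e = β

noncomputable def acyclicChromaticIndex {V : Type*} (G : SimpleGraph V) : ℕ :=
  sInf {n | ∃ c : Sym2 V → ℕ, IsAcyclicEdgeColoring G c ∧ ∀ e ∈ G.edgeSet, c e < n}

def Chordless {V : Type*} (G : SimpleGraph V) : Prop :=
  ∀ u v : V, G.Adj u v →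
    ¬ ∃ (x : V) (w : (G.deleteEdges {s(u, v)}).Walk x x),
        w.IsCycle ∧ u ∈ w.support ∧ v ∈ w.support

def TwoSparse {V : Type*} (G : SimpleGraph V) : Prop :=
  ∀ u v, G.Adj u v → edeg G u ≤ 2 ∨ edeg G v ≤ 2

lemma three_le_edeg_of_mem_cycle_deleteEdges {V : Type*} [Finite V] {G : SimpleGraph V}
    {u x : V} {e : Sym2 V} (he : e ∈ G.edgeSet) (hue : u ∈ e)
    {p : (G.deleteEdges {e}).Walk x x} (hp : p.IsCycle) (hu : u ∈ p.support) :
    3 ≤ edeg G u := by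
  obtain ⟨v, rfl⟩ := Sym2.mem_iff_exists.mp hue
  have hv : v ∉ p.toSubgraph.neighborSet u := fun h ↦
    ((deleteEdges_adj ..).mp (p.toSubgraph.neighborSet_subset u h)).2 rfl
  have hsub : insert v (p.toSubgraph.neighborSet u) ⊆ G.neighborSet u := by
    refine Set.insert_subset he fun t ht ↦ ?_
    exact ((deleteEdges_adj ..).mp (p.toSubgraph.neighborSet_subset u ht)).1
  calc 3 = (insert v (p.toSubgraph.neighborSet u)).ncard := by
        rw [Set.ncard_insert_of_notMem hv, hp.ncard_neighborSet_toSubgraph_eq_two hu]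
    _ ≤ edeg G u := Set.ncard_le_ncard hsub

theorem stmt4 {V : Type*} [Fintype V] (G : SimpleGraph V) (h : TwoSparse G) :
    Chordless G := by
  rintro u v huv ⟨x, p, hp, hu, hv⟩
  have hu3 := three_le_edeg_of_mem_cycle_deleteEdges huv (Sym2.mem_mk_left u v) hp hu
  have hv3 := three_le_edeg_of_mem_cycle_deleteEdges huv (Sym2.mem_mk_right u v) hp hv
  rcases h u v huv with h2 | h2 <;> omega
end

section
/- Every chordless graph is 2-degenerate, i.e., every nonempty subgraph of a chordless graph contains a vertex of degree at most 2. -/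
open SimpleGraph

/-! A path starting at `x` that cannot be extended at `x` (e.g. a longest path) contains every
neighbour of `x`, say at positions `1 ≤ i₁ < ⋯ < iₖ` along the path. If `k ≥ 3`, the subpath up
to the farthest neighbour `v_{iₖ}` closes with the edge `v_{iₖ} x` to a cycle through `x`, and
the edge from `x` to a neighbour other than `v₁` and `v_{iₖ}` is a chord of that cycle. -/

open Walk

section

variable {V : Type*} {G : SimpleGraph V}

theorem chordless_iff_forall_isCycle :
    Chordless G ↔ ∀ ⦃x : V⦄ (c : G.Walk x x), c.IsCycle →
      ∀ ⦃u v : V⦄, u ∈ c.support → v ∈ c.support → G.Adj u v → s(u, v) ∈ c.edges := by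
  constructor
  · intro h x c hc u v hu hv huv
    by_contra hne
    have hdel : ∀ e ∈ c.edges, e ∈ (G.deleteEdges {s(u, v)}).edgeSet := fun e he => by
      rw [edgeSet_deleteEdges]
      exact ⟨c.edges_subset_edgeSet he, fun heq => hne (heq ▸ he)⟩
    exact h u v huv ⟨x, c.transfer _ hdel, hc.transfer hdel,
      by rwa [support_transfer], by rwa [support_transfer]⟩
  · rintro h u v huv ⟨x, c, hc, hu, hv⟩
    have hle : G.deleteEdges {s(u, v)} ≤ G := deleteEdges_le _
    have hmem := h (c.mapLe hle) (hc.mapLe hle) (by rwa [support_mapLe_eq_support])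
      (by rwa [support_mapLe_eq_support]) huv
    rw [edges_mapLe_eq_edges] at hmem
    simpa using c.edges_subset_edgeSet hmem

theorem Chordless.comap {W : Type*} {G' : SimpleGraph W}
    (h : Chordless G) (f : G' →g G) (hf : Function.Injective f) : Chordless G' := by
  rw [chordless_iff_forall_isCycle] at h ⊢
  intro x c hc u v hu hv huv
  have hmem := h (c.map f) (hc.map hf) (by simpa [Walk.support_map] using List.mem_map_of_mem hu)
    (by simpa [Walk.support_map] using List.mem_map_of_mem hv) (f.map_adj huv)
  rw [edges_map, List.mem_map] at hmem
  obtain ⟨e, he, hfe⟩ := hmem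
  rwa [← Sym2.map.injective hf (hfe.trans (Sym2.map_mk f u v).symm)]

theorem SimpleGraph.exists_isPath_forall_adj_mem_support [Finite V] [Nonempty V]
    (G : SimpleGraph V) :
    ∃ (x y : V) (p : G.Walk x y), p.IsPath ∧ ∀ w, G.Adj x w → w ∈ p.support := by
  have := Fintype.ofFinite V
  by_contra! hext
  have hlong : ∀ n, ∃ (x y : V) (p : G.Walk x y), p.IsPath ∧ p.length = n := by
    intro n
    induction n with
    | zero => exact ⟨Classical.arbitrary V, _, nil, IsPath.nil, rfl⟩
    | succ n ih =>
      obtain ⟨x, y, p, hp, rfl⟩ := ih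
      obtain ⟨w, hxw, hw⟩ := hext x y p hp
      exact ⟨w, y, cons hxw.symm p, hp.cons hw, rfl⟩
  obtain ⟨x, y, p, hp, hlen⟩ := hlong (Fintype.card V)
  exact hp.length_lt.ne hlen

theorem Chordless.not_adj_getVert_of_adj_getVert (h : Chordless G) {x y : V} {p : G.Walk x y}
    (hp : p.IsPath) {i j : ℕ} (hi : 1 < i) (hij : i < j) (hj : j ≤ p.length)
    (hxj : G.Adj x (p.getVert j)) :
    ¬ G.Adj x (p.getVert i) := by
  intro hxi
  have hinj {k l : ℕ} (hk : k ≤ j) (hl : l ≤ j) (hkl : p.getVert k = p.getVert l) : k = l :=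
    hp.getVert_injOn (hk.trans hj) (hl.trans hj) hkl
  have hsnd : (p.take j).snd = p.getVert 1 := by
    simp [Walk.snd, take_getVert, Nat.min_eq_right (by omega : 1 ≤ j)]
  have hcycle : (cons hxj.symm (p.take j)).IsCycle := by
    refine (cons_isCycle_iff _ _).2 ⟨hp.take j, fun hmem => ?_⟩
    have := hinj le_rfl (by omega) <|
      hsnd ▸ (hp.take j).eq_snd_of_mem_edges (Sym2.eq_swap ▸ hmem)
    omega
  have hvi : p.getVert i ∈ (cons hxj.symm (p.take j)).support := by
    simpa [take_getVert, Nat.min_eq_right hij.le] using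
      List.mem_cons_of_mem _ ((p.take j).getVert_mem_support i)
  have hchord := chordless_iff_forall_isCycle.1 h _ hcycle (by simp) hvi hxi
  rw [edges_cons, List.mem_cons] at hchord
  rcases hchord with hclose | hpath
  · rcases Sym2.eq_iff.1 hclose with ⟨-, hix⟩ | ⟨-, hij'⟩
    · exact hxi.ne hix.symm
    · exact hij.ne (hinj hij.le le_rfl hij')
  · have := hinj hij.le (by omega) (hsnd ▸ (hp.take j).eq_snd_of_mem_edges hpath)
    omega

theorem Chordless.ncard_neighborSet_le_two (h : Chordless G)
    {x y : V} {p : G.Walk x y} (hp : p.IsPath) (hx : ∀ w, G.Adj x w → w ∈ p.support) :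
    (G.neighborSet x).ncard ≤ 2 := by
  classical
  by_contra! hdeg
  set I := (Finset.range (p.length + 1)).filter fun i => G.Adj x (p.getVert i) with hI
  have hmemI {i} : i ∈ I ↔ i ≤ p.length ∧ G.Adj x (p.getVert i) := by simp [hI]
  have hcard : 2 < I.card := by
    have hsub : G.neighborSet x ⊆ (I.image p.getVert : Finset V) := fun w hw => by
      obtain ⟨i, rfl, hi⟩ := mem_support_iff_exists_getVert.1 (hx w hw)
      simpa using ⟨i, hmemI.2 ⟨hi, hw⟩, rfl⟩
    calc 2 < (G.neighborSet x).ncard := hdeg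
      _ ≤ (I.image p.getVert).card := (Set.ncard_le_ncard hsub).trans_eq (Set.ncard_coe_finset _)
      _ ≤ I.card := Finset.card_image_le
  have hIne : I.Nonempty := Finset.card_pos.1 (by omega)
  obtain ⟨i, hi'⟩ : ((I.erase (I.max' hIne)).erase 1).Nonempty := Finset.card_pos.1 (by
    have := Finset.pred_card_le_card_erase (s := I.erase (I.max' hIne)) (a := 1)
    have := Finset.pred_card_le_card_erase (s := I) (a := I.max' hIne)
    omega)
  obtain ⟨hi1, hij, hi⟩ : i ≠ 1 ∧ i ≠ I.max' hIne ∧ i ∈ I := by simpa using hi'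
  have hi0 : i ≠ 0 := by
    rintro rfl
    simpa using (hmemI.1 hi).2
  obtain ⟨hj, hxj⟩ := hmemI.1 (I.max'_mem hIne)
  exact h.not_adj_getVert_of_adj_getVert hp (by omega) (lt_of_le_of_ne (I.le_max' i hi) hij) hj
    hxj (hmemI.1 hi).2

end

theorem stmt5 {V : Type*} [Fintype V] (G : SimpleGraph V) (h : Chordless G) :
    ∀ S : Set V, S.Nonempty → ∃ v : S, edeg (G.induce S) v ≤ 2 := by
  intro S hS
  have : Nonempty S := hS.to_subtype
  obtain ⟨x, _, p, hp, hx⟩ := (G.induce S).exists_isPath_forall_adj_mem_support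
  exact ⟨x, (h.comap (Embedding.induce S).toHom Subtype.val_injective).ncard_neighborSet_le_two
    hp hx⟩
end

section
/- Let G be a 2-connected, not 2-sparse chordless graph in which no edge joins two vertices of degree 2, and let (X, Y, a, b) be a split of a proper 2-cutset of G such that G_X(a,b) is 2-sparse and both a and b have degree at least 3 in G_X(a,b). Then every (a,b)-path in G_X(a,b) has even length. -/
open SimpleGraph

def TwoConnected {V : Type*} [Fintype V] (G : SimpleGraph V) : Prop :=
  3 ≤ Fintype.card V ∧ ∀ v : V, (G.induce {u | u ≠ v}).Connected

def IsLinearForest {α : Type*} (H : SimpleGraph α) : Prop :=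
  H.IsAcyclic ∧ ∀ v, edeg H v ≤ 2

def IsPathGraph {α : Type*} (H : SimpleGraph α) : Prop :=
  H.Connected ∧ IsLinearForest H

def IsSplit {V : Type*} (G : SimpleGraph V) (X Y : Set V) (a b : V) : Prop :=
  a ≠ b ∧ ¬ G.Adj a b ∧ X.Nonempty ∧ Y.Nonempty ∧
  a ∉ X ∧ a ∉ Y ∧ b ∉ X ∧ b ∉ Y ∧ Disjoint X Y ∧
  X ∪ Y ∪ {a, b} = Set.univ ∧
  (∀ x ∈ X, ∀ y ∈ Y, ¬ G.Adj x y) ∧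
  (G.induce (X ∪ {a, b})).Reachable ⟨a, by simp⟩ ⟨b, by simp⟩ ∧
  (G.induce (Y ∪ {a, b})).Reachable ⟨a, by simp⟩ ⟨b, by simp⟩ ∧
  ¬ IsPathGraph (G.induce (X ∪ {a, b})) ∧
  ¬ IsPathGraph (G.induce (Y ∪ {a, b}))

def blockX {V : Type*} (G : SimpleGraph V) (X : Set V) (a b : V) :
    SimpleGraph (Option ↥(X ∪ {a, b})) :=
  SimpleGraph.fromRel fun x y =>
    match x, y with
    | some u, some v => G.Adj u v
    | none, some v => (v : V) = a ∨ (v : V) = b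
    | _, _ => False


set_option linter.unusedSectionVars false in
lemma aux_deg_ge_two {V : Type*} [Fintype V] (G : SimpleGraph V) (h2c : TwoConnected G)
    (v : V) : 2 ≤ edeg G v := by
  by_contra h
  push_neg at h
  obtain ⟨w, hwv, hw⟩ : ∃ w, w ≠ v ∧ {u | G.Adj v u} ⊆ {w} := by
    interval_cases h' : edeg G v
    · have hemp : {u | G.Adj v u} = ∅ := by
        rw [← Set.ncard_eq_zero (Set.toFinite _)] at *; exact h'
      have : ∃ w : V, w ≠ v := by
        have h3 := h2c.1
        by_contra hc
        push_neg at hc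
        have : (Finset.univ : Finset V) ⊆ {v} := fun u _ => by simp [hc u]
        have := Finset.card_le_card this
        simp at this; omega
      obtain ⟨w, hw⟩ := this
      exact ⟨w, hw, by rw [hemp]; exact Set.empty_subset _⟩
    · obtain ⟨w, hw⟩ := (Set.ncard_eq_one (s := {u | G.Adj v u})).mp h'
      refine ⟨w, ?_, by rw [hw]⟩
      have : G.Adj v w := by
        have : w ∈ {u | G.Adj v u} := hw ▸ rfl
        exact this
      exact fun hc => G.irrefl (hc ▸ this)
  obtain ⟨u, huv, huw⟩ : ∃ u : V, u ≠ v ∧ u ≠ w := by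
    by_contra hc
    push_neg at hc
    classical
    have hsub : (Finset.univ : Finset V) ⊆ {v, w} := by
      intro u _
      rcases Classical.em (u = v) with h1 | h1
      · simp [h1]
      · simp [hc u h1]
    have := Finset.card_le_card hsub
    have h3 := h2c.1
    have h2 : ({v, w} : Finset V).card ≤ 2 :=
      (Finset.card_insert_le _ _).trans (by simp)
    have : Fintype.card V ≤ 2 := by
      simpa using this.trans h2
    omega
  have hconn := h2c.2 w
  have hr := hconn.preconnected ⟨v, hwv.symm⟩ ⟨u, huw⟩
  obtain ⟨p⟩ := hr
  cases p with
  | nil => simp_all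
  | cons ha p =>
    rename_i z
    have : G.Adj v z.val := ha
    have := hw this
    exact z.prop (by simpa using this)

lemma aux_walk_parity {α : Type*} (H : SimpleGraph α) (f : α → Prop)
    (hf : ∀ u v, H.Adj u v → (f u ↔ ¬ f v)) :
    ∀ {u v : α} (p : H.Walk u v), Even p.length ↔ (f u ↔ f v) := by
  intro u v p
  induction p with
  | nil => simp
  | cons h p ih =>
    have h1 := hf _ _ h
    simp only [SimpleGraph.Walk.length_cons, Nat.even_add_one, ih]
    tauto

lemma aux_adj_some_some {V : Type*} (G : SimpleGraph V) (X : Set V) (a b : V)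
    (x y : ↥(X ∪ {a, b})) :
    (blockX G X a b).Adj (some x) (some y) ↔ G.Adj x y := by
  constructor
  · intro h
    rcases h with ⟨hne, h | h⟩
    · exact h
    · exact h.symm
  · intro h
    refine ⟨?_, Or.inl h⟩
    intro hc
    have : x = y := by injection hc
    exact G.irrefl (this ▸ h)

lemma aux_adj_none_some {V : Type*} (G : SimpleGraph V) (X : Set V) (a b : V)
    (y : ↥(X ∪ {a, b})) :
    (blockX G X a b).Adj none (some y) ↔ ((y : V) = a ∨ (y : V) = b) := by
  constructor
  · intro h
    rcases h with ⟨hne, h | h⟩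
    · exact h
    · exact h.elim
  · intro h
    exact ⟨by simp, Or.inl h⟩


theorem stmt9 {V : Type*} [Fintype V] (G : SimpleGraph V) (h2c : TwoConnected G)
    (hch : Chordless G) (hns : ¬ TwoSparse G)
    (hnoedge : ∀ u v : V, G.Adj u v → ¬(edeg G u = 2 ∧ edeg G v = 2))
    (X Y : Set V) (a b : V) (hsplit : IsSplit G X Y a b)
    (hsp : TwoSparse (blockX G X a b))
    (hda : 3 ≤ edeg (blockX G X a b) (some ⟨a, by simp⟩))
    (hdb : 3 ≤ edeg (blockX G X a b) (some ⟨b, by simp⟩)) :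
    ∀ p : (blockX G X a b).Walk (some ⟨a, by simp⟩) (some ⟨b, by simp⟩),
      p.IsPath → Even p.length := by
  classical
  obtain ⟨hab, hnadj, hXne, hYne, haX, haY, hbX, hbY, hdisj, huniv, hXY, -, -, -, -⟩ := hsplit
  set H := blockX G X a b with hH
  set va : ↥(X ∪ {a, b}) := ⟨a, by simp⟩ with hva
  set vb : ↥(X ∪ {a, b}) := ⟨b, by simp⟩ with hvb
  -- degree comparison for vertices in X
  have hdegX : ∀ x : ↥(X ∪ {a, b}), (x : V) ∈ X → edeg G x ≤ edeg H (some x) := by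
    intro x hx
    have hxa : (x : V) ≠ a := fun h => haX (h ▸ hx)
    have hxb : (x : V) ≠ b := fun h => hbX (h ▸ hx)
    apply Set.ncard_le_ncard_of_injOn
      (f := fun u => if h : u ∈ X ∪ {a, b} then some (⟨u, h⟩ : ↥(X ∪ {a, b})) else none)
    · intro u hu
      have hadj : G.Adj (x : V) u := hu
      have humem : u ∈ X ∪ {a, b} := by
        have : u ∈ X ∪ Y ∪ {a, b} := huniv ▸ Set.mem_univ u
        rcases this with (h1 | h1) | h1
        · exact Or.inl h1
        · exact absurd hadj (hXY _ hx _ h1)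
        · exact Or.inr h1
      simp only [dif_pos humem, Set.mem_setOf_eq]
      exact (aux_adj_some_some G X a b x ⟨u, humem⟩).mpr hadj
    · intro u hu u' hu' he
      have hadj : G.Adj (x : V) u := hu
      have hadj' : G.Adj (x : V) u' := hu'
      have humem : u ∈ X ∪ {a, b} := by
        have : u ∈ X ∪ Y ∪ {a, b} := huniv ▸ Set.mem_univ u
        rcases this with (h1 | h1) | h1
        · exact Or.inl h1
        · exact absurd hadj (hXY _ hx _ h1)
        · exact Or.inr h1
      have humem' : u' ∈ X ∪ {a, b} := by
        have : u' ∈ X ∪ Y ∪ {a, b} := huniv ▸ Set.mem_univ u'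
        rcases this with (h1 | h1) | h1
        · exact Or.inl h1
        · exact absurd hadj' (hXY _ hx _ h1)
        · exact Or.inr h1
      simp only [dif_pos humem, dif_pos humem'] at he
      have := Option.some_injective _ he
      exact congrArg Subtype.val this
  -- bipartite structure: every edge joins a big vertex and a small vertex
  have key : ∀ u v, H.Adj u v → ((3 ≤ edeg H u) ↔ ¬ (3 ≤ edeg H v)) := by
    intro u v hadj
    constructor
    · intro hu hv
      rcases hsp u v hadj with h | h <;> omega
    · intro hv
      by_contra hu
      push_neg at hu hv
      match u, v with
      | none, none => exact H.irrefl hadj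
      | none, some y =>
        rcases (aux_adj_none_some G X a b y).mp hadj with h | h
        · have : y = va := Subtype.ext h
          rw [this] at hv; omega
        · have : y = vb := Subtype.ext h
          rw [this] at hv; omega
      | some x, none =>
        rcases (aux_adj_none_some G X a b x).mp hadj.symm with h | h
        · have : x = va := Subtype.ext h
          rw [this] at hu; omega
        · have : x = vb := Subtype.ext h
          rw [this] at hu; omega
      | some x, some y =>
        have hGadj : G.Adj (x : V) (y : V) := (aux_adj_some_some G X a b x y).mp hadj
        have hxX : (x : V) ∈ X := by
          rcases x.prop with h | h
          · exact h
          · rcases h with h | h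
            · exact absurd (Subtype.ext h : x = va) (fun he => by rw [he] at hu; omega)
            · exact absurd (Subtype.ext h : x = vb) (fun he => by rw [he] at hu; omega)
        have hyX : (y : V) ∈ X := by
          rcases y.prop with h | h
          · exact h
          · rcases h with h | h
            · exact absurd (Subtype.ext h : y = va) (fun he => by rw [he] at hv; omega)
            · exact absurd (Subtype.ext h : y = vb) (fun he => by rw [he] at hv; omega)
        have h1 := aux_deg_ge_two G h2c (x : V)
        have h2 := aux_deg_ge_two G h2c (y : V)
        have h3 := hdegX x hxX
        have h4 := hdegX y hyX
        exact hnoedge _ _ hGadj ⟨by omega, by omega⟩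
  intro p hp
  have := (aux_walk_parity H (fun v => 3 ≤ edeg H v) key p).mpr
  exact this (by constructor <;> intro <;> [exact hdb; exact hda])
end

section
/- Let c be a proper partial edge coloring of a graph G and let ab be an uncolored edge. A candidate color β for ab (a color appearing on no edge incident to a or b) fails to be valid (i.e., assigning β to ab creates a bichromatic cycle) if and only if there exists a color α, appearing both on an edge at a (other than ab) and on an edge at b (other than ab), such that G contains an (α,β)-bichromatic path from a to b beginning and ending with edges colored α. -/
/-! Since `c` has no bichromatic cycle, a bichromatic cycle of the recoloring must use the edge
`ab`, and `β` is one of its two colors, say with `α` the other. Removing `ab` from the cycle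
leaves an `(α, β)`-path from `a` to `b`; its end edges sit at `a` and `b`, where `β` is missing,
so they are colored `α`. Conversely, such a path closes up with `ab` into an `(α, β)`-cycle. -/

open SimpleGraph

def IsProperPartial {V : Type*} (G : SimpleGraph V) (c : Sym2 V → Option ℕ) : Prop :=
  (∀ e, c e ≠ none → e ∈ G.edgeSet) ∧
  ∀ e₁ ∈ G.edgeSet, ∀ e₂ ∈ G.edgeSet, e₁ ≠ e₂ → (∃ v, v ∈ e₁ ∧ v ∈ e₂) →
    ∀ k : ℕ, c e₁ = some k → c e₂ ≠ some k

def HasBichromaticCycle {V : Type*} (G : SimpleGraph V) (c : Sym2 V → Option ℕ) : Prop :=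
  ∃ (v : V) (w : G.Walk v v), w.IsCycle ∧
    ∃ α β : ℕ, ∀ e ∈ w.edges, c e = some α ∨ c e = some β

namespace SimpleGraph.Walk

variable {V : Type*} {G : SimpleGraph V}

theorem head?_edges_of_not_nil {u v : V} {p : G.Walk u v} (hp : ¬p.Nil) :
    p.edges.head? = some s(u, p.snd) := by
  rw [List.head?_eq_some_head (edges_eq_nil.not.mpr hp), head_edges_eq_mk_start_snd]

theorem getLast?_edges_of_not_nil {u v : V} {p : G.Walk u v} (hp : ¬p.Nil) :
    p.edges.getLast? = some s(p.penultimate, v) := by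
  rw [List.getLast?_eq_some_getLast (edges_eq_nil.not.mpr hp), getLast_edges_eq_mk_penultimate_end]

theorem IsCycle.exists_isPath_of_mk_start_mem_edges {u v : V} {p : G.Walk u u} (hp : p.IsCycle)
    (h : s(u, v) ∈ p.edges) :
    ∃ q : G.Walk v u, q.IsPath ∧ ∀ e ∈ q.edges, e ∈ p.edges ∧ e ≠ s(u, v) := by
  have of_snd : ∀ p : G.Walk u u, p.IsCycle → p.snd = v →
      ∃ q : G.Walk v u, q.IsPath ∧ ∀ e ∈ q.edges, e ∈ p.edges ∧ e ≠ s(u, v) := by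
    rintro (_ | ⟨hx, q⟩) hp hsnd
    · exact absurd hp not_isCycle_nil
    · rw [snd_cons] at hsnd
      subst hsnd
      rw [cons_isCycle_iff] at hp
      exact ⟨q, hp.1, fun e he => ⟨List.mem_cons_of_mem _ he, fun h => hp.2 (h ▸ he)⟩⟩
  have hv : v ∈ p.toSubgraph.neighborSet u := adj_toSubgraph_iff_mem_edges.mpr h
  rw [hp.neighborSet_toSubgraph_endpoint] at hv
  rcases hv with hv | hv
  · exact of_snd p hp hv.symm
  · obtain ⟨q, hq, hqe⟩ := of_snd p.reverse hp.reverse (by rw [snd_reverse, hv])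
    exact ⟨q, hq, fun e he => (hqe e he).imp_left (by simpa using ·)⟩

theorem IsCycle.exists_isPath_of_mem_edges [DecidableEq V] {w u v : V} {p : G.Walk w w}
    (hp : p.IsCycle) (h : s(u, v) ∈ p.edges) :
    ∃ q : G.Walk v u, q.IsPath ∧ ∀ e ∈ q.edges, e ∈ p.edges ∧ e ≠ s(u, v) := by
  have hu := p.fst_mem_support_of_mem_edges h
  have hrot := p.rotate_edges u hu
  obtain ⟨q, hq, hqe⟩ := (hp.rotate hu).exists_isPath_of_mk_start_mem_edges (hrot.mem_iff.mpr h)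
  exact ⟨q, hq, fun e he => (hqe e he).imp_left hrot.mem_iff.mp⟩

end SimpleGraph.Walk

open SimpleGraph.Walk

section Recolor

variable {V : Type*} [DecidableEq V] {G : SimpleGraph V} {c : Sym2 V → Option ℕ} {a b : V}
  {α β : ℕ}

theorem hasBichromaticCycle_recolor_of_isPath (hab : G.Adj a b) (huncol : c s(a, b) = none)
    {p : G.Walk a b} (hp : p.IsPath) (hpc : ∀ e ∈ p.edges, c e = some α ∨ c e = some β) :
    HasBichromaticCycle G (fun e => if e = s(a, b) then some β else c e) := by
  have hnotMem : s(a, b) ∉ p.edges := fun h => by simpa [huncol] using hpc _ h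
  refine ⟨b, cons hab.symm p, (cons_isCycle_iff p hab.symm).mpr ⟨hp, by rwa [Sym2.eq_swap]⟩,
    β, α, fun e he => ?_⟩
  rw [edges_cons, List.mem_cons] at he
  rcases he with rfl | he
  · simp [Sym2.eq_swap]
  · simpa [ne_of_mem_of_not_mem he hnotMem] using (hpc e he).symm

theorem exists_isPath_of_hasBichromaticCycle_recolor (hacyc : ¬HasBichromaticCycle G c)
    (h : HasBichromaticCycle G (fun e => if e = s(a, b) then some β else c e)) :
    ∃ (α : ℕ) (p : G.Walk a b), p.IsPath ∧ ∀ e ∈ p.edges, c e = some α ∨ c e = some β := by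
  obtain ⟨v, w, hw, γ, δ, hcol⟩ := h
  have hmem : s(a, b) ∈ w.edges := by
    by_contra hn
    refine hacyc ⟨v, w, hw, γ, δ, fun e he => ?_⟩
    simpa [ne_of_mem_of_not_mem he hn] using hcol e he
  obtain ⟨α, hα⟩ : ∃ α, ∀ e ∈ w.edges,
      (if e = s(a, b) then some β else c e) = some α ∨
        (if e = s(a, b) then some β else c e) = some β := by
    rcases hcol _ hmem with hγ | hδ
    · obtain rfl : β = γ := by simpa using hγ
      exact ⟨δ, fun e he => (hcol e he).symm⟩
    · obtain rfl : β = δ := by simpa using hδ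
      exact ⟨γ, hcol⟩
  obtain ⟨p, hp, hpw⟩ := hw.exists_isPath_of_mem_edges (u := b) (v := a) (by rwa [Sym2.eq_swap])
  refine ⟨α, p, hp, fun e he => ?_⟩
  have hne : e ≠ s(a, b) := Sym2.eq_swap (a := a) ▸ (hpw e he).2
  simpa [hne] using hα e (hpw e he).1

end Recolor

theorem stmt13_general {V : Type*} [DecidableEq V] (G : SimpleGraph V) (c : Sym2 V → Option ℕ)
    (hacyc : ¬ HasBichromaticCycle G c)
    (a b : V) (hab : G.Adj a b) (huncol : c s(a, b) = none) (β : ℕ)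
    (hcand : (∀ x : V, G.Adj a x → c s(a, x) ≠ some β) ∧
             (∀ x : V, G.Adj b x → c s(b, x) ≠ some β)) :
    HasBichromaticCycle G (fun e => if e = s(a, b) then some β else c e) ↔
      ∃ α : ℕ,
        (∃ x : V, G.Adj a x ∧ s(a, x) ≠ s(a, b) ∧ c s(a, x) = some α) ∧
        (∃ y : V, G.Adj b y ∧ s(b, y) ≠ s(a, b) ∧ c s(b, y) = some α) ∧
        ∃ (p : G.Walk a b) (e₁ e₂ : Sym2 V), p.IsPath ∧
          (∀ e ∈ p.edges, c e = some α ∨ c e = some β) ∧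
          p.edges.head? = some e₁ ∧ c e₁ = some α ∧
          p.edges.getLast? = some e₂ ∧ c e₂ = some α := by
  constructor
  · intro h
    obtain ⟨α, p, hp, hpc⟩ := exists_isPath_of_hasBichromaticCycle_recolor hacyc h
    have hnil : ¬p.Nil := not_nil_of_ne hab.ne
    have hnotMem : s(a, b) ∉ p.edges := fun h => by simpa [huncol] using hpc _ h
    have hfirst := mk_start_snd_mem_edges hnil
    have hlast := mk_penultimate_end_mem_edges hnil
    rw [Sym2.eq_swap] at hlast
    have hcx : c s(a, p.snd) = some α := (hpc _ hfirst).resolve_right (hcand.1 _ (adj_snd hnil))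
    have hcy : c s(b, p.penultimate) = some α :=
      (hpc _ hlast).resolve_right (hcand.2 _ (adj_penultimate hnil).symm)
    refine ⟨α, ⟨_, adj_snd hnil, ne_of_mem_of_not_mem hfirst hnotMem, hcx⟩,
      ⟨_, (adj_penultimate hnil).symm, ne_of_mem_of_not_mem hlast hnotMem, hcy⟩,
      p, _, _, hp, hpc, head?_edges_of_not_nil hnil, hcx, ?_, hcy⟩
    rw [getLast?_edges_of_not_nil hnil, Sym2.eq_swap]
  · rintro ⟨α, -, -, p, -, -, hp, hpc, -⟩
    exact hasBichromaticCycle_recolor_of_isPath hab huncol hp hpc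

theorem stmt13 {V : Type*} [Fintype V] [DecidableEq V] (G : SimpleGraph V) (c : Sym2 V → Option ℕ)
    (hproper : IsProperPartial G c) (hacyc : ¬ HasBichromaticCycle G c)
    (a b : V) (hab : G.Adj a b) (huncol : c s(a, b) = none) (β : ℕ)
    (hcand : (∀ x : V, G.Adj a x → c s(a, x) ≠ some β) ∧
             (∀ x : V, G.Adj b x → c s(b, x) ≠ some β)) :
    HasBichromaticCycle G (fun e => if e = s(a, b) then some β else c e) ↔
      ∃ α : ℕ,
        (∃ x : V, G.Adj a x ∧ s(a, x) ≠ s(a, b) ∧ c s(a, x) = some α) ∧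
        (∃ y : V, G.Adj b y ∧ s(b, y) ≠ s(a, b) ∧ c s(b, y) = some α) ∧
        ∃ (p : G.Walk a b) (e₁ e₂ : Sym2 V), p.IsPath ∧
          (∀ e ∈ p.edges, c e = some α ∨ c e = some β) ∧
          p.edges.head? = some e₁ ∧ c e₁ = some α ∧
          p.edges.getLast? = some e₂ ∧ c e₂ = some α :=
  stmt13_general G c hacyc a b hab huncol β hcand
end

section
/- Let G be a graph with maximum degree Δ ≥ 3 containing an edge uv whose endpoints both have degree 2, with u' the other neighbor of u and v' the other neighbor of v. Let H be obtained from G by contracting uv to a vertex k. If H has an acyclic edge coloring d with Δ colors, then G has an acyclic edge coloring c with Δ colors, obtained by setting c(uu') = d(ku'), c(vv') = d(kv'), coloring uv with any third color distinct from both, and keeping all other edge colors. -/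
/-! A cycle of `G` through `u` or `v` has to run along the whole path `u' - u - v - v'`, since
`u` and `v` have degree two; its edges get the three distinct colours `c(uv)`, `d(uu')`, `d(uv')`
(the last two differ because `uu'` and `uv'` meet at the contracted vertex). A cycle avoiding
`u` and `v` is a cycle of the contracted graph with the same colours. Properness only needs a
check at `v'`, where `vv'` inherits the colour of the edge `uv'` of the contracted graph. -/

open SimpleGraph

namespace SimpleGraph

variable {V : Type*} {G : SimpleGraph V}

lemma edge_eq_or_eq_of_neighborSet_eq {x a b : V} (hN : G.neighborSet x = {a, b})
    {e : Sym2 V} (he : e ∈ G.edgeSet) (hx : x ∈ e) : e = s(x, a) ∨ e = s(x, b) := by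
  induction e using Sym2.ind with
  | _ y z =>
    have hadj : ∀ w, G.Adj x w → w = a ∨ w = b := fun w hw => by
      simpa [hN] using (show w ∈ G.neighborSet x from hw)
    rcases Sym2.mem_iff.1 hx with rfl | rfl
    · rcases hadj z he with rfl | rfl <;> simp
    · rcases hadj y he.symm with rfl | rfl <;> simp [Sym2.eq_swap]

lemma ne_of_neighborSet_eq {x a b : V} (hN : G.neighborSet x = {a, b}) {c : Sym2 V → ℕ}
    (hc : c s(x, a) ≠ c s(x, b)) {e₁ e₂ : Sym2 V} (he₁ : e₁ ∈ G.edgeSet) (he₂ : e₂ ∈ G.edgeSet)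
    (hne : e₁ ≠ e₂) (hx₁ : x ∈ e₁) (hx₂ : x ∈ e₂) : c e₁ ≠ c e₂ := by
  rcases edge_eq_or_eq_of_neighborSet_eq hN he₁ hx₁ with rfl | rfl <;>
    rcases edge_eq_or_eq_of_neighborSet_eq hN he₂ hx₂ with rfl | rfl
  all_goals first | exact absurd rfl hne | exact hc | exact hc.symm

lemma Walk.IsCycle.mem_edges_of_neighborSet_subset {r x y a b : V} {w : G.Walk r r}
    (hw : w.IsCycle) (hx : x ∈ w.support) (hN : G.neighborSet x ⊆ {a, b}) (hxy : G.Adj x y) :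
    s(x, y) ∈ w.edges := by
  have hsub : w.toSubgraph.neighborSet x ⊆ {a, b} :=
    (w.toSubgraph.neighborSet_subset x).trans hN
  have hcard : ({a, b} : Set V).ncard ≤ (w.toSubgraph.neighborSet x).ncard := by
    rw [hw.ncard_neighborSet_toSubgraph_eq_two hx]
    exact (Set.ncard_insert_le a {b}).trans (by simp)
  have heq := Set.eq_of_subset_of_ncard_le hsub hcard (Set.toFinite _)
  have hy : y ∈ w.toSubgraph.neighborSet x := heq ▸ hN hxy
  exact Walk.adj_toSubgraph_iff_mem_edges.1 hy

lemma Walk.IsCycle.suspendedPath_subset_edges {r u v u' v' : V} {w : G.Walk r r}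
    (hw : w.IsCycle) (hNu : G.neighborSet u = {v, u'}) (hNv : G.neighborSet v = {u, v'})
    (hs : u ∈ w.support ∨ v ∈ w.support) :
    s(u, v) ∈ w.edges ∧ s(u, u') ∈ w.edges ∧ s(v, v') ∈ w.edges := by
  have hadj : ∀ {x a b}, G.neighborSet x = {a, b} → G.Adj x a ∧ G.Adj x b := fun hN =>
    ⟨by simp [← mem_neighborSet, hN], by simp [← mem_neighborSet, hN]⟩
  have hu : u ∈ w.support := hs.elim id fun hv => w.snd_mem_support_of_mem_edges
    (hw.mem_edges_of_neighborSet_subset hv hNv.le (hadj hNv).1)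
  have huv := hw.mem_edges_of_neighborSet_subset hu hNu.le (hadj hNu).1
  have hv : v ∈ w.support := w.snd_mem_support_of_mem_edges huv
  exact ⟨huv, hw.mem_edges_of_neighborSet_subset hu hNu.le (hadj hNu).2,
    hw.mem_edges_of_neighborSet_subset hv hNv.le (hadj hNv).2⟩

end SimpleGraph

section Contraction

variable {V : Type*} {G H : SimpleGraph V} {u v u' v' : V} {c d : Sym2 V → ℕ}

lemma IsAcyclicEdgeColoring.not_bicolored_of_forall_mem_edges (hd : IsAcyclicEdgeColoring H d)
    {r : V} {w : G.Walk r r} (hw : w.IsCycle) (hwH : ∀ e ∈ w.edges, e ∈ H.edgeSet ∧ c e = d e) :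
    ¬ ∃ α β : ℕ, ∀ e ∈ w.edges, c e = α ∨ c e = β := by
  rintro ⟨α, β, hαβ⟩
  refine hd.2 r (w.transfer H fun e he => (hwH e he).1) (hw.transfer _) ⟨α, β, fun e he => ?_⟩
  rw [Walk.edges_transfer] at he
  rw [← (hwH e he).2]
  exact hαβ e he

lemma mem_edgeSet_of_deleteEdges_le (hGH : G.deleteEdges {s(u, v), s(v, v')} ≤ H) {e : Sym2 V}
    (he : e ∈ G.edgeSet) (huv : e ≠ s(u, v)) (hvv' : e ≠ s(v, v')) : e ∈ H.edgeSet :=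
  edgeSet_mono hGH (by simp [he, huv, hvv'])

lemma isProperEdgeColoring_of_contract (hNu : G.neighborSet u = {v, u'})
    (hNv : G.neighborSet v = {u, v'}) (hu'v' : u' ≠ v')
    (hGH : G.deleteEdges {s(u, v), s(v, v')} ≤ H) (hH : H.Adj u v')
    (hd : IsProperEdgeColoring H d) (hcu : c s(u, v) ≠ c s(u, u'))
    (hcv : c s(u, v) ≠ c s(v, v')) (hvv' : c s(v, v') = d s(u, v'))
    (hother : ∀ e, e ≠ s(u, v) → e ≠ s(v, v') → c e = d e) :
    IsProperEdgeColoring G c := by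
  have huv'G : s(u, v') ∉ G.edgeSet := fun h => by
    have : v' ∈ G.neighborSet u := h
    rw [hNu] at this
    have hvv'G : v' ∈ G.neighborSet v := by simp [hNv]
    simp [hu'v'.symm, (G.ne_of_adj hvv'G).symm] at this
  have hv' : ∀ e ∈ G.edgeSet, e ≠ s(u, v) → e ≠ s(v, v') → v' ∈ e → c s(v, v') ≠ c e := by
    intro e he huv hvv'e hv'e
    rw [hvv', hother e huv hvv'e]
    exact hd _ hH _ (mem_edgeSet_of_deleteEdges_le hGH he huv hvv'e)
      (by rintro rfl; exact huv'G he) ⟨v', by simp, hv'e⟩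
  rintro e₁ he₁ e₂ he₂ hne ⟨x, hx₁, hx₂⟩
  by_cases hxu : x = u
  · subst hxu
    exact ne_of_neighborSet_eq hNu hcu he₁ he₂ hne hx₁ hx₂
  by_cases hxv : x = v
  · subst hxv
    exact ne_of_neighborSet_eq hNv (by rwa [Sym2.eq_swap]) he₁ he₂ hne hx₁ hx₂
  have huv : ∀ {e}, x ∈ e → e ≠ s(u, v) := by
    rintro e hx rfl
    simp [hxu, hxv] at hx
  have hxv' : x ∈ s(v, v') → x = v' := fun hx => by simpa [hxv] using hx
  by_cases h₁ : e₁ = s(v, v')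
  · subst h₁
    exact hv' e₂ he₂ (huv hx₂) (Ne.symm hne) (hxv' hx₁ ▸ hx₂)
  by_cases h₂ : e₂ = s(v, v')
  · subst h₂
    exact (hv' e₁ he₁ (huv hx₁) hne (hxv' hx₂ ▸ hx₁)).symm
  rw [hother e₁ (huv hx₁) h₁, hother e₂ (huv hx₂) h₂]
  exact hd _ (mem_edgeSet_of_deleteEdges_le hGH he₁ (huv hx₁) h₁) _
    (mem_edgeSet_of_deleteEdges_le hGH he₂ (huv hx₂) h₂) hne ⟨x, hx₁, hx₂⟩

lemma not_bicolored_cycle_of_contract (hNu : G.neighborSet u = {v, u'})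
    (hNv : G.neighborSet v = {u, v'}) (hGH : G.deleteEdges {s(u, v), s(v, v')} ≤ H)
    (hd : IsAcyclicEdgeColoring H d) (hcu : c s(u, v) ≠ c s(u, u'))
    (hcv : c s(u, v) ≠ c s(v, v')) (hcuv : c s(u, u') ≠ c s(v, v'))
    (hother : ∀ e, e ≠ s(u, v) → e ≠ s(v, v') → c e = d e) {r : V} {w : G.Walk r r}
    (hw : w.IsCycle) : ¬ ∃ α β : ℕ, ∀ e ∈ w.edges, c e = α ∨ c e = β := by
  by_cases hs : u ∈ w.support ∨ v ∈ w.support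
  · obtain ⟨h₁, h₂, h₃⟩ := hw.suspendedPath_subset_edges hNu hNv hs
    rintro ⟨α, β, hαβ⟩
    have := hαβ _ h₁
    have := hαβ _ h₂
    have := hαβ _ h₃
    omega
  push Not at hs
  refine hd.not_bicolored_of_forall_mem_edges hw fun e he => ?_
  have huv : e ≠ s(u, v) := by
    rintro rfl
    exact hs.1 (w.fst_mem_support_of_mem_edges he)
  have hvv' : e ≠ s(v, v') := by
    rintro rfl
    exact hs.2 (w.fst_mem_support_of_mem_edges he)
  exact ⟨mem_edgeSet_of_deleteEdges_le hGH (w.edges_subset_edgeSet he) huv hvv',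
    hother e huv hvv'⟩

lemma edgeColor_lt_of_contract {Δ : ℕ} (hGH : G.deleteEdges {s(u, v), s(v, v')} ≤ H)
    (hH : H.Adj u v')
    (hdΔ : ∀ e ∈ H.edgeSet, d e < Δ) (hcuv : c s(u, v) < Δ) (hvv' : c s(v, v') = d s(u, v'))
    (hother : ∀ e, e ≠ s(u, v) → e ≠ s(v, v') → c e = d e) : ∀ e ∈ G.edgeSet, c e < Δ := by
  intro e he
  by_cases h₁ : e = s(u, v)
  · exact h₁ ▸ hcuv
  by_cases h₂ : e = s(v, v')
  · exact h₂ ▸ hvv' ▸ hdΔ _ hH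
  exact hother e h₁ h₂ ▸ hdΔ e (mem_edgeSet_of_deleteEdges_le hGH he h₁ h₂)

end Contraction

lemma exists_lt_three_ne_ne (a b : ℕ) : ∃ γ < 3, γ ≠ a ∧ γ ≠ b := by
  by_contra! h
  have := h 0
  have := h 1
  have := h 2
  omega

theorem stmt15_general {V : Type*} (G : SimpleGraph V) (Δ : ℕ) (hΔ : 3 ≤ Δ)
    (u v u' v' : V) (huv : G.Adj u v)
    (hNu : {x | G.Adj u x} = {v, u'}) (hNv : {x | G.Adj v x} = {u, v'})
    (hu'v : u' ≠ v) (hv'u : v' ≠ u) (hu'v' : u' ≠ v')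
    (d : Sym2 V → ℕ)
    (hd : IsAcyclicEdgeColoring
      ((G.deleteEdges {s(u, v), s(v, v')}) ⊔ SimpleGraph.fromEdgeSet {s(u, v')}) d)
    (hdcol : ∀ e ∈ ((G.deleteEdges {s(u, v), s(v, v')}) ⊔
      SimpleGraph.fromEdgeSet {s(u, v')}).edgeSet, d e < Δ) :
    ∃ c : Sym2 V → ℕ, IsAcyclicEdgeColoring G c ∧ (∀ e ∈ G.edgeSet, c e < Δ) ∧
      c s(u, u') = d s(u, u') ∧ c s(v, v') = d s(u, v') ∧
      c s(u, v) ≠ c s(u, u') ∧ c s(u, v) ≠ c s(v, v') ∧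
      ∀ e ∈ G.edgeSet, e ∉ ({s(u, v), s(u, u'), s(v, v')} : Set (Sym2 V)) →
        c e = d e := by
  classical
  set H := G.deleteEdges {s(u, v), s(v, v')} ⊔ SimpleGraph.fromEdgeSet {s(u, v')}
  have hGH : G.deleteEdges {s(u, v), s(v, v')} ≤ H := le_sup_left
  have hH : H.Adj u v' := Or.inr (by simp [hv'u.symm])
  have hGu' : G.Adj u u' := show u' ∈ {x | G.Adj u x} by simp [hNu]
  have huu'uv : s(u, u') ≠ s(u, v) := by simp [hu'v, huv.ne]
  have huu'vv' : s(u, u') ≠ s(v, v') := by simp [huv.ne, hv'u.symm]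
  have huvvv' : s(u, v) ≠ s(v, v') := by simp [huv.ne, hv'u.symm]
  have hdu : d s(u, u') ≠ d s(u, v') := hd.1 _
    (mem_edgeSet_of_deleteEdges_le hGH hGu' huu'uv huu'vv') _ hH (by simp [hu'v', hv'u.symm])
    ⟨u, by simp, by simp⟩
  obtain ⟨γ, hγ, hγu, hγv⟩ := exists_lt_three_ne_ne (d s(u, u')) (d s(u, v'))
  set c := Function.update (Function.update d s(v, v') (d s(u, v'))) s(u, v) γ
  have hother : ∀ e, e ≠ s(u, v) → e ≠ s(v, v') → c e = d e := fun e h₁ h₂ => by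
    simp [c, h₁, h₂]
  have hcuv : c s(u, v) = γ := by simp [c]
  have hcvv' : c s(v, v') = d s(u, v') := by simp [c, huvvv'.symm]
  have hcuu' : c s(u, u') = d s(u, u') := hother _ huu'uv huu'vv'
  have hcu : c s(u, v) ≠ c s(u, u') := by rwa [hcuv, hcuu']
  have hcv : c s(u, v) ≠ c s(v, v') := by rwa [hcuv, hcvv']
  refine ⟨c, ⟨isProperEdgeColoring_of_contract hNu hNv hu'v' hGH hH hd.1 hcu hcv hcvv' hother,
    fun _ _ => not_bicolored_cycle_of_contract hNu hNv hGH hd hcu hcv (by rwa [hcuu', hcvv'])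
      hother⟩, edgeColor_lt_of_contract hGH hH hdcol (by omega) hcvv' hother, hcuu', hcvv',
    hcu, hcv,
    fun e _ he => hother e (fun h => he (by simp [h])) (fun h => he (by simp [h]))⟩

theorem stmt15 {V : Type*} [Fintype V] (G : SimpleGraph V) (Δ : ℕ) (hΔ : 3 ≤ Δ)
    (hmax : ∀ w : V, edeg G w ≤ Δ)
    (u v u' v' : V) (huv : G.Adj u v)
    (hNu : {x | G.Adj u x} = {v, u'}) (hNv : {x | G.Adj v x} = {u, v'})
    (hu'v : u' ≠ v) (hv'u : v' ≠ u) (hu'v' : u' ≠ v')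
    (d : Sym2 V → ℕ)
    (hd : IsAcyclicEdgeColoring
      ((G.deleteEdges {s(u, v), s(v, v')}) ⊔ SimpleGraph.fromEdgeSet {s(u, v')}) d)
    (hdcol : ∀ e ∈ ((G.deleteEdges {s(u, v), s(v, v')}) ⊔
      SimpleGraph.fromEdgeSet {s(u, v')}).edgeSet, d e < Δ) :
    ∃ c : Sym2 V → ℕ, IsAcyclicEdgeColoring G c ∧ (∀ e ∈ G.edgeSet, c e < Δ) ∧
      c s(u, u') = d s(u, u') ∧ c s(v, v') = d s(u, v') ∧
      c s(u, v) ≠ c s(u, u') ∧ c s(u, v) ≠ c s(v, v') ∧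
      ∀ e ∈ G.edgeSet, e ∉ ({s(u, v), s(u, u'), s(v, v')} : Set (Sym2 V)) →
        c e = d e :=
  stmt15_general G Δ hΔ u v u' v' huv hNu hNv hu'v hv'u hu'v' d hd hdcol
end
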